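/- arXiv:1002.2174 — 4 statements merged into one kernel-verified Lean document; each statement's English description precedes it below -/
import Mathlib

section
/- Let k_f : [0,∞)×[0,∞) → ℝ be continuous, nonnegative and symmetric (k_f(x,y) = k_f(y,x) for all x,y ≥ 0), and let u : [0,∞) → ℝ be continuous, nonnegative and compactly supported. Then ∫_0^∞ x·Q_f(u)(x) dx = 0, i.e. the fragmentation operator conserves the total mass ∫_0^∞ x u(x) dx. -/
/-!
Write `F(x, z) = x k(x, z - x) u(z)` for `0 < x < z`: the mass that particles of size `z` hand
over to fragments of size `x`. Multiplied by `x`, the loss term of `Q_f(u)` is `∫ F(x, z) dz`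
after the substitution `z = x + y`, and the gain term is `∫ F(z', x) dz'`, because the symmetry
`k(y, x - y) = k(x - y, y)` lets the weight `x / 2` be replaced by the fragment size `y`.
Hence `∫ x Q_f(u)(x) dx = ∬ F(z', x) - ∬ F(x, z) = 0` by Fubini, which applies since `F` is
bounded with bounded support. Continuity on all of `ℝ` is arranged by evaluating `k_f` and `u`
at `max · 0`, which does not change `Q_f(u)` on `[0, ∞)`.
-/

open MeasureTheory

/-- The fragmentation operator:
`Q_f(u)(x) = (1/2) u(x) ∫_0^x k_f(y, x−y) dy − ∫_0^∞ k_f(x,y) u(x+y) dy`. -/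
noncomputable def Qf (kf : ℝ → ℝ → ℝ) (u : ℝ → ℝ) (x : ℝ) : ℝ :=
  (1 / 2) * u x * (∫ y in (0:ℝ)..x, kf y (x - y))
    - ∫ y in Set.Ioi (0:ℝ), kf x y * u (x + y)

open Set

theorem intervalIntegral.integral_id_mul_of_symm {f : ℝ → ℝ} {a b : ℝ}
    (hf : IntervalIntegrable f volume a b) (hsymm : ∀ x, f (a + b - x) = f x) :
    ∫ x in a..b, x * f x = (a + b) / 2 * ∫ x in a..b, f x := by
  have hreflect : ∫ x in a..b, (a + b - x) * f x = ∫ x in a..b, x * f x := by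
    simpa [hsymm] using
      intervalIntegral.integral_comp_sub_left (fun x => x * f x) (a := a) (b := b) (a + b)
  have hid : IntervalIntegrable (fun x => x * f x) volume a b :=
    hf.continuousOn_mul continuousOn_id
  have hrev : IntervalIntegrable (fun x => (a + b - x) * f x) volume a b :=
    hf.continuousOn_mul (by fun_prop)
  have hsum : (∫ x in a..b, x * f x) + ∫ x in a..b, (a + b - x) * f x
      = (a + b) * ∫ x in a..b, f x := by
    rw [← intervalIntegral.integral_const_mul, ← intervalIntegral.integral_add hid hrev]
    congr 1 with x
    ring
  rw [hreflect] at hsum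
  linear_combination hsum / 2

noncomputable def massTransfer (K : ℝ → ℝ → ℝ) (v : ℝ → ℝ) (x z : ℝ) : ℝ :=
  (Ioo 0 z).indicator (fun x => x * K x (z - x) * v z) x

theorem uncurry_massTransfer (K : ℝ → ℝ → ℝ) (v : ℝ → ℝ) :
    Function.uncurry (massTransfer K v)
      = {p : ℝ × ℝ | p.1 ∈ Ioo 0 p.2}.indicator fun p => p.1 * K p.1 (p.2 - p.1) * v p.2 :=
  rfl

theorem integrable_massTransfer {K : ℝ → ℝ → ℝ} {v : ℝ → ℝ} {M : ℝ}
    (hK : Continuous (Function.uncurry K)) (hv : Continuous v) (hvM : ∀ z ≥ M, v z = 0) :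
    Integrable (Function.uncurry (massTransfer K v)) (volume.prod volume) := by
  have hS : MeasurableSet {p : ℝ × ℝ | p.1 ∈ Ioo 0 p.2} :=
    (measurableSet_lt measurable_const measurable_fst).inter
      (measurableSet_lt measurable_fst measurable_snd)
  rw [uncurry_massTransfer, integrable_indicator_iff hS]
  have hg : Continuous fun p : ℝ × ℝ => p.1 * K p.1 (p.2 - p.1) * v p.2 := by fun_prop
  refine IntegrableOn.of_forall_sdiff_eq_zero (s := Icc 0 M ×ˢ Icc 0 M)
    (hg.continuousOn.integrableOn_compact (isCompact_Icc.prod isCompact_Icc)) hS ?_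
  rintro ⟨x, z⟩ ⟨⟨hx, hxz⟩, hbox⟩
  have hMz : M ≤ z := by
    by_contra! hzM
    exact hbox ⟨⟨hx.le, by linarith⟩, ⟨by linarith, hzM.le⟩⟩
  simp [hvM z hMz]

theorem massTransfer_of_nonpos_left (K : ℝ → ℝ → ℝ) (v : ℝ → ℝ) {x : ℝ} (hx : x ≤ 0) (z : ℝ) :
    massTransfer K v x z = 0 :=
  indicator_of_notMem (fun h => hx.not_gt h.1) _

theorem massTransfer_of_nonpos_right (K : ℝ → ℝ → ℝ) (v : ℝ → ℝ) {z : ℝ} (hz : z ≤ 0) (x : ℝ) :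
    massTransfer K v x z = 0 :=
  indicator_of_notMem (fun h => hz.not_gt (h.1.trans h.2)) _

theorem integral_massTransfer_left (K : ℝ → ℝ → ℝ) (v : ℝ → ℝ) {x : ℝ} (hx : 0 < x) :
    ∫ z, massTransfer K v x z = x * ∫ y in Ioi 0, K x y * v (x + y) := by
  have hshift := (measurePreserving_add_left volume x).setIntegral_preimage_emb
    (measurableEmbedding_addLeft x) (fun z => x * K x (z - x) * v z) (Ioi x)
  rw [preimage_const_add_Ioi, sub_self] at hshift
  have hsupp :
      (fun z => massTransfer K v x z) = (Ioi x).indicator fun z => x * K x (z - x) * v z := by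
    ext z
    by_cases hxz : x < z
    · simp [massTransfer, hx, hxz]
    · simp [massTransfer, hxz]
  rw [hsupp, integral_indicator measurableSet_Ioi, ← hshift, ← integral_const_mul]
  simp only [add_sub_cancel_left, mul_assoc]

theorem integral_massTransfer_right {K : ℝ → ℝ → ℝ} (v : ℝ → ℝ)
    (hK : Continuous (Function.uncurry K)) (hKsymm : ∀ x y, K x y = K y x) {z : ℝ} (hz : 0 ≤ z) :
    ∫ x, massTransfer K v x z = z * ((1 / 2) * v z * ∫ y in (0:ℝ)..z, K y (z - y)) := by
  have hmid := intervalIntegral.integral_id_mul_of_symm (a := 0) (b := z)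
    (f := fun x => K x (z - x)) (by apply Continuous.intervalIntegrable; fun_prop)
    (fun x => by simp [hKsymm x])
  simp only [massTransfer]
  rw [integral_indicator measurableSet_Ioo, ← integral_Ioc_eq_integral_Ioo,
    ← intervalIntegral.integral_of_le hz, intervalIntegral.integral_mul_const, hmid, zero_add]
  ring

theorem integral_mul_Qf_eq_zero_of_continuous {K : ℝ → ℝ → ℝ} {v : ℝ → ℝ} {M : ℝ}
    (hK : Continuous (Function.uncurry K)) (hKsymm : ∀ x y, K x y = K y x)
    (hv : Continuous v) (hvM : ∀ z ≥ M, v z = 0) :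
    ∫ x in Ioi 0, x * Qf K v x = 0 := by
  have hF := integrable_massTransfer hK hv hvM
  have hbalance : ∀ x ∈ Ioi (0 : ℝ),
      x * Qf K v x = (∫ z, massTransfer K v z x) - ∫ z, massTransfer K v x z := by
    intro x hx
    rw [Qf, mul_sub, integral_massTransfer_right v hK hKsymm hx.le,
      integral_massTransfer_left K v hx]
  have hvanish : ∀ x ∉ Ioi (0 : ℝ),
      (∫ z, massTransfer K v z x) - ∫ z, massTransfer K v x z = 0 := by
    intro x hx
    rw [notMem_Ioi] at hx
    simp [massTransfer_of_nonpos_left K v hx, massTransfer_of_nonpos_right K v hx]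
  calc ∫ x in Ioi 0, x * Qf K v x
      = ∫ x in Ioi 0, ((∫ z, massTransfer K v z x) - ∫ z, massTransfer K v x z) :=
        setIntegral_congr_fun measurableSet_Ioi hbalance
    _ = ∫ x, ((∫ z, massTransfer K v z x) - ∫ z, massTransfer K v x z) :=
        setIntegral_eq_integral_of_forall_compl_eq_zero hvanish
    _ = (∫ x, ∫ z, massTransfer K v z x) - ∫ x, ∫ z, massTransfer K v x z :=
        integral_sub hF.integral_prod_right hF.integral_prod_left
    _ = 0 := by rw [integral_integral_swap hF, sub_self]

theorem Qf_congr {K K' : ℝ → ℝ → ℝ} {v v' : ℝ → ℝ}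
    (hK : ∀ x ≥ 0, ∀ y ≥ 0, K x y = K' x y) (hv : EqOn v v' (Ici 0)) :
    EqOn (Qf K v) (Qf K' v') (Ici 0) := by
  intro x (hx : 0 ≤ x)
  have hgain : ∫ y in (0:ℝ)..x, K y (x - y) = ∫ y in (0:ℝ)..x, K' y (x - y) :=
    intervalIntegral.integral_congr fun y hy => by
      rw [uIcc_of_le hx] at hy
      exact hK y hy.1 (x - y) (by linarith [hy.2])
  have hloss : ∫ y in Ioi 0, K x y * v (x + y) = ∫ y in Ioi 0, K' x y * v' (x + y) :=
    setIntegral_congr_fun measurableSet_Ioi fun y (hy : 0 < y) => by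
      rw [hK x hx y hy.le, hv (show 0 ≤ x + y by linarith)]
  rw [Qf, Qf, hv hx, hgain, hloss]

theorem fragmentation_mass_conservation_general
    (kf : ℝ → ℝ → ℝ) (u : ℝ → ℝ)
    (hkf_cont : ContinuousOn (fun p : ℝ × ℝ => kf p.1 p.2) (Set.Ici 0 ×ˢ Set.Ici 0))
    (hkf_symm : ∀ x ∈ Set.Ici (0:ℝ), ∀ y ∈ Set.Ici (0:ℝ), kf x y = kf y x)
    (hu_cont : ContinuousOn u (Set.Ici 0))
    (hu_supp : ∃ M : ℝ, 0 < M ∧ ∀ x ≥ M, u x = 0) :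
    ∫ x in Set.Ioi (0:ℝ), x * Qf kf u x = 0 := by
  obtain ⟨M, hM, huM⟩ := hu_supp
  set K : ℝ → ℝ → ℝ := fun x y => kf (max x 0) (max y 0)
  set v : ℝ → ℝ := fun x => u (max x 0)
  have hK : Continuous (Function.uncurry K) :=
    hkf_cont.comp_continuous (f := fun p : ℝ × ℝ => (max p.1 0, max p.2 0)) (by fun_prop)
      fun p => ⟨le_max_right p.1 0, le_max_right p.2 0⟩
  have hKsymm : ∀ x y, K x y = K y x := fun x y =>
    hkf_symm _ (le_max_right x 0) _ (le_max_right y 0)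
  have hv : Continuous v := hu_cont.comp_continuous (by fun_prop) fun x => le_max_right x 0
  have hvM : ∀ z ≥ M, v z = 0 := fun z hz => by
    simpa [v, max_eq_left (hM.le.trans hz)] using huM z hz
  have hQ : EqOn (Qf kf u) (Qf K v) (Ici 0) :=
    Qf_congr (fun x hx y hy => by simp [K, max_eq_left hx, max_eq_left hy])
      fun x (hx : 0 ≤ x) => by simp [v, max_eq_left hx]
  rw [setIntegral_congr_fun measurableSet_Ioi fun x (hx : 0 < x) => by rw [hQ hx.le]]
  exact integral_mul_Qf_eq_zero_of_continuous hK hKsymm hv hvM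

/-- the fragmentation operator conserves the total mass. -/
theorem fragmentation_mass_conservation
    (kf : ℝ → ℝ → ℝ) (u : ℝ → ℝ)
    (hkf_cont : ContinuousOn (fun p : ℝ × ℝ => kf p.1 p.2) (Set.Ici 0 ×ˢ Set.Ici 0))
    (hkf_nonneg : ∀ x ∈ Set.Ici (0:ℝ), ∀ y ∈ Set.Ici (0:ℝ), 0 ≤ kf x y)
    (hkf_symm : ∀ x ∈ Set.Ici (0:ℝ), ∀ y ∈ Set.Ici (0:ℝ), kf x y = kf y x)
    (hu_cont : ContinuousOn u (Set.Ici 0))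
    (hu_nonneg : ∀ x ∈ Set.Ici (0:ℝ), 0 ≤ u x)
    (hu_supp : ∃ M : ℝ, 0 < M ∧ ∀ x ≥ M, u x = 0) :
    ∫ x in Set.Ioi (0:ℝ), x * Qf kf u x = 0 :=
  fragmentation_mass_conservation_general kf u hkf_cont hkf_symm hu_cont hu_supp
end

section
/- Let k_f : [0,∞)×[0,∞) → ℝ be continuous and symmetric (k_f(x,y) = k_f(y,x)), and let u : [0,∞) → ℝ be continuous and compactly supported. Define F(u)(x) = ∫_0^x ∫_{x−y}^∞ y · k_f(y,z) u(y+z) dz dy. Then F(u) is differentiable on (0,∞) and for every x > 0, (d/dx) F(u)(x) = −x · Q_f(u)(x); that is, the fragmentation operator admits the conservative form x·Q_f(u) = −∂_x F(u). -/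
open MeasureTheory

/-- The conservative fragmentation flux:
`F(u)(x) = ∫_0^x ∫_{x−y}^∞ y · k_f(y,z) u(y+z) dz dy`. -/
noncomputable def fragFlux (kf : ℝ → ℝ → ℝ) (u : ℝ → ℝ) (x : ℝ) : ℝ :=
  ∫ y in (0:ℝ)..x, ∫ z in Set.Ioi (x - y), y * kf y z * u (y + z)

/-! Extend `k_f` and `u` continuously to `ℝ` by clamping, and let `h y s = y k_f(y, s - y) u(s)`.
The substitution `s = y + z` gives `F(x) = ∫_0^x ∫_x^M h(y,s) ds dy` once `u` vanishes past `M`.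
Splitting `∫_x^M = ∫_y^M - ∫_y^x` and exchanging the order of integration over the triangle
`0 ≤ y ≤ s ≤ x` yields `F(x) = ∫_0^x (∫_t^M h(t,s) ds - ∫_0^t h(y,t) dy) dt`. By symmetry of `k_f`,
`∫_0^t y k_f(y, t - y) dy = (t/2) ∫_0^t k_f(y, t - y) dy`, so the integrand is `-t Q_f(u)(t)`, and
the fundamental theorem of calculus concludes. -/

open Set Function intervalIntegral
open scoped Interval

section IntervalIntegrals

variable {E : Type*} [NormedAddCommGroup E] [NormedSpace ℝ E]

theorem integral_Ioi_eq_intervalIntegral_of_eq_zero {f : ℝ → E} {M : ℝ}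
    (hf : ∀ z ≥ M, f z = 0) (c : ℝ) : ∫ z in Ioi c, f z = ∫ z in c..M, f z := by
  rcases le_total c M with hcM | hMc
  · rw [integral_of_le hcM]
    refine setIntegral_eq_of_subset_of_forall_sdiff_eq_zero measurableSet_Ioi
      Ioc_subset_Ioi_self fun z hz => hf z ?_
    simp only [mem_sdiff, mem_Ioi, mem_Ioc, not_and, not_le] at hz
    exact (hz.2 hz.1).le
  · rw [setIntegral_eq_zero_of_forall_eq_zero (t := Ioi c)
        fun z hz => hf z (hMc.trans (le_of_lt hz)), integral_symm, integral_of_le hMc,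
      setIntegral_eq_zero_of_forall_eq_zero fun z hz => hf z (le_of_lt hz.1), neg_zero]

theorem integral_Ioi_comp_add_left_of_eq_zero {f : ℝ → E} {M : ℝ}
    (hf : ∀ z ≥ M, f z = 0) (a c : ℝ) :
    ∫ z in Ioi c, f (a + z) = ∫ t in (a + c)..M, f t := by
  rw [integral_Ioi_eq_intervalIntegral_of_eq_zero (M := M - a)
    (fun z hz => hf _ (by linarith)) c, integral_comp_add_left, add_sub_cancel]

theorem intervalIntegral_indicator_Ioi {f : ℝ → E} {a₁ a₂ a₃ : ℝ} (h : a₂ ∈ Icc a₁ a₃) :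
    ∫ x in a₁..a₃, (Ioi a₂).indicator f x = ∫ x in a₂..a₃, f x := by
  rw [integral_of_le (h.1.trans h.2), integral_of_le h.2,
    setIntegral_indicator measurableSet_Ioi, Ioc_inter_Ioi, sup_of_le_right h.1]

theorem intervalIntegral_indicator_Iio {f : ℝ → E} {a₁ a₂ a₃ : ℝ} (h : a₂ ∈ Icc a₁ a₃) :
    ∫ x in a₁..a₃, (Iio a₂).indicator f x = ∫ x in a₁..a₂, f x := by
  have hinter : Ioc a₁ a₃ ∩ Iio a₂ = Ioo a₁ a₂ := by
    ext x
    simp only [mem_inter_iff, mem_Ioc, mem_Iio, mem_Ioo]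
    constructor
    · rintro ⟨⟨h₁, -⟩, h₂⟩
      exact ⟨h₁, h₂⟩
    · rintro ⟨h₁, h₂⟩
      exact ⟨⟨h₁, h₂.le.trans h.2⟩, h₂⟩
  rw [integral_of_le (h.1.trans h.2), integral_of_le h.1,
    setIntegral_indicator measurableSet_Iio, hinter, integral_Ioc_eq_integral_Ioo]

theorem continuous_intervalIntegral_lower {X : Type*} [TopologicalSpace X]
    {f : X → ℝ → E} (hf : Continuous (uncurry f)) {s : X → ℝ} (hs : Continuous s) (b : ℝ) :
    Continuous fun x => ∫ t in s x..b, f x t := by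
  simp_rw [integral_symm b]
  exact (continuous_parametric_intervalIntegral_of_continuous hf hs).neg

theorem integral_integral_swap_triangle [CompleteSpace E] {h : ℝ → ℝ → E}
    (hh : Continuous (uncurry h)) {x : ℝ} (hx : 0 ≤ x) :
    ∫ y in 0..x, ∫ t in y..x, h y t = ∫ t in 0..x, ∫ y in 0..t, h y t := by
  set F : ℝ → ℝ → E := fun y t => (Ioi y).indicator (h y) t
  have hF : IntegrableOn (uncurry F) (Ι 0 x ×ˢ Ι 0 x) := by
    have hF_eq : uncurry F = {p : ℝ × ℝ | p.1 < p.2}.indicator (uncurry h) := by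
      ext ⟨y, t⟩
      simp [F, indicator_apply]
    rw [hF_eq, uIoc_of_le hx]
    exact ((hh.continuousOn.integrableOn_compact (isCompact_Icc.prod isCompact_Icc)).mono_set
      (prod_mono Ioc_subset_Icc_self Ioc_subset_Icc_self)).indicator
      (measurableSet_lt measurable_fst measurable_snd)
  calc ∫ y in 0..x, ∫ t in y..x, h y t = ∫ y in 0..x, ∫ t in 0..x, F y t :=
        integral_congr fun y hy =>
          (intervalIntegral_indicator_Ioi (by rwa [uIcc_of_le hx] at hy)).symm
    _ = ∫ t in 0..x, ∫ y in 0..x, F y t := intervalIntegral_intervalIntegral_swap hF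
    _ = ∫ t in 0..x, ∫ y in 0..t, h y t := integral_congr fun t ht => by
        have hF_t : (fun y => F y t) = (Iio t).indicator fun y => h y t := by
          ext y
          simp [F, indicator_apply]
        rw [hF_t, intervalIntegral_indicator_Iio (by rwa [uIcc_of_le hx] at ht)]

end IntervalIntegrals

theorem integral_id_mul_of_symmetric {g : ℝ → ℝ} {x : ℝ} (hg : IntervalIntegrable g volume 0 x)
    (hsymm : ∀ y, g (x - y) = g y) :
    ∫ y in 0..x, y * g y = x / 2 * ∫ y in 0..x, g y := by
  have hreflect : ∫ y in 0..x, y * g y = ∫ y in 0..x, (x - y) * g y := by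
    have := integral_comp_sub_left (fun y => y * g y) x (a := 0) (b := x)
    simp only [sub_self, sub_zero, hsymm] at this
    exact this.symm
  have hsum : (∫ y in 0..x, y * g y) + ∫ y in 0..x, (x - y) * g y = x * ∫ y in 0..x, g y := by
    rw [← integral_add (hg.continuousOn_mul (g := fun y => y) continuousOn_id)
      (hg.continuousOn_mul (g := fun y => x - y) (continuousOn_const.sub continuousOn_id)),
      ← intervalIntegral.integral_const_mul]
    congr 1
    ext y
    ring
  linear_combination (hsum + hreflect) / 2

/-- Mass density of fragments of size `y` produced by the breakup of particles of size `s`. -/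
def fragMassRate (k : ℝ → ℝ → ℝ) (v : ℝ → ℝ) (y s : ℝ) : ℝ :=
  y * k y (s - y) * v s

section Fragmentation

variable {k : ℝ → ℝ → ℝ} {v : ℝ → ℝ} {M : ℝ}

theorem continuous_fragMassRate (hk : Continuous (uncurry k)) (hv : Continuous v) :
    Continuous (uncurry (fragMassRate k v)) :=
  (continuous_fst.mul (hk.comp (continuous_fst.prodMk (continuous_snd.sub continuous_fst)))).mul
    (hv.comp continuous_snd)

theorem fragMassRate_eq_zero (hv0 : ∀ s ≥ M, v s = 0) (y : ℝ) :
    ∀ s ≥ M, fragMassRate k v y s = 0 := fun s hs => by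
  rw [fragMassRate, hv0 s hs, mul_zero]

theorem neg_mul_Qf_eq (hk : Continuous (uncurry k)) (hsymm : ∀ a b, k a b = k b a)
    (hv0 : ∀ s ≥ M, v s = 0) (x : ℝ) :
    -(x * Qf k v x) = (∫ s in x..M, fragMassRate k v x s) - ∫ y in 0..x, fragMassRate k v y x := by
  have hloss : x * ∫ z in Ioi 0, k x z * v (x + z) = ∫ s in x..M, fragMassRate k v x s := by
    calc x * ∫ z in Ioi 0, k x z * v (x + z) = ∫ z in Ioi 0, fragMassRate k v x (x + z) := by
          rw [← MeasureTheory.integral_const_mul]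
          simp only [fragMassRate, add_sub_cancel_left, mul_assoc]
      _ = ∫ s in x..M, fragMassRate k v x s := by
          rw [integral_Ioi_comp_add_left_of_eq_zero (fragMassRate_eq_zero (k := k) hv0 x), add_zero]
  have hgain : x / 2 * (∫ y in 0..x, k y (x - y)) * v x = ∫ y in 0..x, fragMassRate k v y x := by
    have hcont : Continuous fun y => k y (x - y) :=
      hk.comp (continuous_id.prodMk (continuous_const.sub continuous_id))
    rw [← integral_id_mul_of_symmetric (hcont.intervalIntegrable 0 x)
      (fun y => by rw [sub_sub_cancel, hsymm]), ← intervalIntegral.integral_mul_const]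
    rfl
  rw [Qf, ← hloss, ← hgain]
  ring

theorem continuous_neg_mul_Qf (hk : Continuous (uncurry k)) (hv : Continuous v)
    (hsymm : ∀ a b, k a b = k b a) (hv0 : ∀ s ≥ M, v s = 0) :
    Continuous fun x => -(x * Qf k v x) := by
  have hrate := continuous_fragMassRate hk hv
  simp_rw [neg_mul_Qf_eq hk hsymm hv0]
  exact (continuous_intervalIntegral_lower hrate continuous_id M).sub
    (continuous_parametric_intervalIntegral_of_continuous
      (f := fun t y => fragMassRate k v y t) (hrate.comp continuous_swap) continuous_id)

theorem fragFlux_eq_integral_neg_mul_Qf (hk : Continuous (uncurry k)) (hv : Continuous v)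
    (hsymm : ∀ a b, k a b = k b a) (hv0 : ∀ s ≥ M, v s = 0) {x : ℝ} (hx : 0 ≤ x) :
    fragFlux k v x = ∫ t in 0..x, -(t * Qf k v t) := by
  have hrate := continuous_fragMassRate hk hv
  have hinner : ∀ y, ∫ z in Ioi (x - y), y * k y z * v (y + z)
      = (∫ s in y..M, fragMassRate k v y s) - ∫ s in y..x, fragMassRate k v y s := by
    intro y
    have hsubst :=
      integral_Ioi_comp_add_left_of_eq_zero (fragMassRate_eq_zero (k := k) hv0 y) y (x - y)
    simp only [fragMassRate, add_sub_cancel_left, add_sub_cancel] at hsubst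
    rw [integral_interval_sub_left ((hrate.uncurry_left y).intervalIntegrable _ _)
      ((hrate.uncurry_left y).intervalIntegrable _ _), hsubst]
    rfl
  have hlower : ∀ b, IntervalIntegrable (fun y => ∫ s in y..b, fragMassRate k v y s) volume 0 x :=
    fun b => (continuous_intervalIntegral_lower hrate continuous_id b).intervalIntegrable _ _
  have hgain : IntervalIntegrable (fun t => ∫ y in 0..t, fragMassRate k v y t) volume 0 x :=
    (continuous_parametric_intervalIntegral_of_continuous
      (f := fun t y => fragMassRate k v y t) (hrate.comp continuous_swap)
      continuous_id).intervalIntegrable _ _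
  calc fragFlux k v x
      = ∫ y in 0..x, ((∫ s in y..M, fragMassRate k v y s) - ∫ s in y..x, fragMassRate k v y s) :=
        integral_congr fun y _ => hinner y
    _ = (∫ y in 0..x, ∫ s in y..M, fragMassRate k v y s)
          - ∫ y in 0..x, ∫ s in y..x, fragMassRate k v y s := integral_sub (hlower M) (hlower x)
    _ = (∫ t in 0..x, ∫ s in t..M, fragMassRate k v t s)
          - ∫ t in 0..x, ∫ y in 0..t, fragMassRate k v y t := by
        rw [integral_integral_swap_triangle hrate hx]
    _ = ∫ t in 0..x, -(t * Qf k v t) := by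
        rw [← integral_sub (hlower M) hgain]
        exact integral_congr fun t _ => (neg_mul_Qf_eq hk hsymm hv0 t).symm

theorem hasDerivAt_fragFlux (hk : Continuous (uncurry k)) (hv : Continuous v)
    (hsymm : ∀ a b, k a b = k b a) (hv0 : ∀ s ≥ M, v s = 0) {x : ℝ} (hx : 0 < x) :
    HasDerivAt (fragFlux k v) (-(x * Qf k v x)) x := by
  refine ((continuous_neg_mul_Qf hk hv hsymm hv0).integral_hasStrictDerivAt 0 x).hasDerivAt
    |>.congr_of_eventuallyEq ?_
  filter_upwards [lt_mem_nhds hx] with s hs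
  exact fragFlux_eq_integral_neg_mul_Qf hk hv hsymm hv0 hs.le

end Fragmentation

theorem fragFlux_congr {k k' : ℝ → ℝ → ℝ} {u u' : ℝ → ℝ} (hk : ∀ a ≥ 0, ∀ b ≥ 0, k a b = k' a b)
    (hu : ∀ s ≥ 0, u s = u' s) {x : ℝ} (hx : 0 ≤ x) : fragFlux k u x = fragFlux k' u' x := by
  refine integral_congr fun y hy => setIntegral_congr_fun measurableSet_Ioi fun z hz => ?_
  rw [uIcc_of_le hx] at hy
  have hz : 0 ≤ z := by linarith [hy.2, mem_Ioi.1 hz]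
  simp only [hk y hy.1 z hz, hu (y + z) (add_nonneg hy.1 hz)]

theorem Qf_congr_s3 {k k' : ℝ → ℝ → ℝ} {u u' : ℝ → ℝ} (hk : ∀ a ≥ 0, ∀ b ≥ 0, k a b = k' a b)
    (hu : ∀ s ≥ 0, u s = u' s) {x : ℝ} (hx : 0 ≤ x) : Qf k u x = Qf k' u' x := by
  have hgain : ∫ y in 0..x, k y (x - y) = ∫ y in 0..x, k' y (x - y) :=
    integral_congr fun y hy => by
      rw [uIcc_of_le hx] at hy
      exact hk y hy.1 (x - y) (sub_nonneg.2 hy.2)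
  have hloss : ∫ y in Ioi 0, k x y * u (x + y) = ∫ y in Ioi 0, k' x y * u' (x + y) :=
    setIntegral_congr_fun measurableSet_Ioi fun y hy => by
      rw [hk x hx y (le_of_lt hy), hu (x + y) (by linarith [mem_Ioi.1 hy])]
  rw [Qf, Qf, hgain, hloss, hu x hx]

/-- the fragmentation operator admits the conservative form
`x·Q_f(u) = −∂_x F(u)` on `(0,∞)`. -/
theorem fragmentation_conservative_form
    (kf : ℝ → ℝ → ℝ) (u : ℝ → ℝ)
    (hkf_cont : ContinuousOn (fun p : ℝ × ℝ => kf p.1 p.2) (Set.Ici 0 ×ˢ Set.Ici 0))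
    (hkf_symm : ∀ x ∈ Set.Ici (0:ℝ), ∀ y ∈ Set.Ici (0:ℝ), kf x y = kf y x)
    (hu_cont : ContinuousOn u (Set.Ici 0))
    (hu_supp : ∃ M : ℝ, 0 < M ∧ ∀ x ≥ M, u x = 0) :
    ∀ x > (0:ℝ), HasDerivAt (fragFlux kf u) (-(x * Qf kf u x)) x := by
  obtain ⟨M, -, hM⟩ := hu_supp
  intro x hx
  set k : ℝ → ℝ → ℝ := fun a b => kf (max a 0) (max b 0)
  set v : ℝ → ℝ := fun s => u (max s 0)
  have hk_eq : ∀ a ≥ 0, ∀ b ≥ 0, kf a b = k a b := fun a ha b hb => by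
    simp only [k, max_eq_left ha, max_eq_left hb]
  have hu_eq : ∀ s ≥ 0, u s = v s := fun s hs => by simp only [v, max_eq_left hs]
  have hk : Continuous (uncurry k) :=
    hkf_cont.comp_continuous (f := fun p : ℝ × ℝ => (max p.1 0, max p.2 0)) (by fun_prop)
      fun p => ⟨le_max_right p.1 0, le_max_right p.2 0⟩
  have hv : Continuous v := hu_cont.comp_continuous (by fun_prop) fun s => le_max_right s 0
  have hsymm : ∀ a b, k a b = k b a := fun a b => hkf_symm _ (le_max_right a 0) _ (le_max_right b 0)
  have hv0 : ∀ s ≥ M, v s = 0 := fun s hs => hM _ (hs.trans (le_max_left s 0))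
  rw [Qf_congr_s3 hk_eq hu_eq hx.le]
  refine (hasDerivAt_fragFlux hk hv hsymm hv0 hx).congr_of_eventuallyEq ?_
  filter_upwards [lt_mem_nhds hx] with s hs
  exact fragFlux_congr hk_eq hu_eq hs.le
end

section
/- For every real h > 0 and every real polynomial p of degree at most 3, ∫_0^h p(x) dx = h·( (55/24)·p(h) − (59/24)·p(2h) + (37/24)·p(3h) − (9/24)·p(4h) ). In particular, the boundary quadrature formula ∑'_{k=0}^{1} f_k = (55/24)f_1 − (59/24)f_2 + (37/24)f_3 − (9/24)f_4 used on the first cell (which avoids the boundary value f_0) is exact for cubic polynomials and hence fifth-order accurate. -/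
open MeasureTheory

/-!
Both sides are linear in `p`, so it suffices to check the identity on the monomials
`1, x, x², x³`. Integrating termwise reduces it to four polynomial identities in `h`,
which are the moment conditions defining the weights `55, -59, 37, -9` (over `24`).
-/

theorem Polynomial.integral_eval_eq_sum_range {p : Polynomial ℝ} {n : ℕ} (hn : p.natDegree < n)
    (a b : ℝ) :
    ∫ x in a..b, p.eval x =
      ∑ i ∈ Finset.range n, p.coeff i * ((b ^ (i + 1) - a ^ (i + 1)) / (i + 1)) := by
  simp only [Polynomial.eval_eq_sum_range' hn]
  rw [intervalIntegral.integral_finsetSum fun i _ =>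
    ((continuous_pow i).const_mul (p.coeff i)).intervalIntegrable a b]
  simp only [intervalIntegral.integral_const_mul, integral_pow]

theorem boundary_quadrature_exact_for_cubics_general
    (h : ℝ) (p : Polynomial ℝ) (hp : p.degree ≤ 3) :
    ∫ x in (0:ℝ)..h, p.eval x
      = h * ((55 / 24) * p.eval h - (59 / 24) * p.eval (2 * h)
          + (37 / 24) * p.eval (3 * h) - (9 / 24) * p.eval (4 * h)) := by
  have hp4 : p.natDegree < 4 :=
    Nat.lt_succ_of_le (Polynomial.natDegree_le_iff_degree_le.mpr hp)
  rw [Polynomial.integral_eval_eq_sum_range hp4]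
  simp only [Polynomial.eval_eq_sum_range' hp4, Finset.sum_range_succ, Finset.sum_range_zero]
  ring

/-- the boundary quadrature formula
`∑'_{k=0}^{1} f_k = (55/24)f_1 − (59/24)f_2 + (37/24)f_3 − (9/24)f_4`
(used on the first cell, avoiding the boundary value `f_0`) is exact for cubic
polynomials on a uniform grid of step `h`. -/
theorem boundary_quadrature_exact_for_cubics
    (h : ℝ) (hh : 0 < h) (p : Polynomial ℝ) (hp : p.degree ≤ 3) :
    ∫ x in (0:ℝ)..h, p.eval x
      = h * ((55 / 24) * p.eval h - (59 / 24) * p.eval (2 * h)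
          + (37 / 24) * p.eval (3 * h) - (9 / 24) * p.eval (4 * h)) :=
  boundary_quadrature_exact_for_cubics_general h p hp
end

section
/- Let h > 0 and let i < j be integers with j − i ≥ 7. Then for every real polynomial p of degree at most 3, setting x_k = k·h, one has ∫_{x_i}^{x_j} p(x) dx = h·[ (251/720)(p(x_i) + p(x_j)) + (299/240)(p(x_{i+1}) + p(x_{j−1})) + (211/240)(p(x_{i+2}) + p(x_{j−2})) + (739/720)(p(x_{i+3}) + p(x_{j−3})) + Σ_{k=i+4}^{j−4} p(x_k) ]. In other words, the fifth-order composite quadrature rule with endpoint weights 251/720, 299/240, 211/240, 739/720 and interior weight 1 is exact for cubic polynomials. -/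
/-! Write `∑'` for the composite rule. Moving the right endpoint from `j` to `j + 1`
changes `h ∑'` by `h/720 · (251 f_{j+1} + 646 f_j - 264 f_{j-1} + 106 f_{j-2} - 19 f_{j-3})`,
which is the four-step Adams–Moulton formula for `∫_{jh}^{(j+1)h}`; it is exact for
polynomials of degree `≤ 4`. So by induction on `j` it suffices to check the shortest case
`j = i + 7`, an eight-point rule that is exact for cubics. -/

open MeasureTheory Polynomial

theorem Polynomial.intervalIntegral_eval_eq_sum_range {p : ℝ[X]} {n : ℕ} (hn : p.natDegree < n)
    (a b : ℝ) :
    ∫ x in a..b, p.eval x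
      = ∑ k ∈ Finset.range n, p.coeff k * ((b ^ (k + 1) - a ^ (k + 1)) / (k + 1)) := by
  simp_rw [eval_eq_sum_range' hn]
  rw [intervalIntegral.integral_finsetSum fun k _ =>
    ((continuous_pow k).const_mul (p.coeff k)).intervalIntegrable a b]
  simp [integral_pow]

theorem Polynomial.intervalIntegral_eval_eq_adamsMoulton {p : ℝ[X]} (hp : p.degree ≤ 4)
    (a h : ℝ) :
    ∫ x in a..a + h, p.eval x
      = h * (251 * p.eval (a + h) + 646 * p.eval a - 264 * p.eval (a - h)
          + 106 * p.eval (a - 2 * h) - 19 * p.eval (a - 3 * h)) / 720 := by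
  have hn : p.natDegree < 5 := Nat.lt_succ_of_le (natDegree_le_iff_degree_le.2 hp)
  rw [intervalIntegral_eval_eq_sum_range hn]
  simp only [eval_eq_sum_range' hn, Finset.sum_range_succ, Finset.sum_range_zero]
  ring

theorem Polynomial.intervalIntegral_eval_eq_eightPoint {p : ℝ[X]} (hp : p.degree ≤ 3)
    (a h : ℝ) :
    ∫ x in a..a + 7 * h, p.eval x
      = h * (251 / 720 * (p.eval a + p.eval (a + 7 * h))
          + 299 / 240 * (p.eval (a + h) + p.eval (a + 6 * h))
          + 211 / 240 * (p.eval (a + 2 * h) + p.eval (a + 5 * h))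
          + 739 / 720 * (p.eval (a + 3 * h) + p.eval (a + 4 * h))) := by
  have hn : p.natDegree < 4 := Nat.lt_succ_of_le (natDegree_le_iff_degree_le.2 hp)
  rw [intervalIntegral_eval_eq_sum_range hn]
  simp only [eval_eq_sum_range' hn, Finset.sum_range_succ, Finset.sum_range_zero]
  ring

/-- The paper's `∑'_{k=i}^{j} f_k`. -/
noncomputable def compositeSum (f : ℤ → ℝ) (i j : ℤ) : ℝ :=
  251 / 720 * (f i + f j) + 299 / 240 * (f (i + 1) + f (j - 1))
    + 211 / 240 * (f (i + 2) + f (j - 2)) + 739 / 720 * (f (i + 3) + f (j - 3))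
    + ∑ k ∈ Finset.Icc (i + 4) (j - 4), f k

theorem compositeSum_add_seven (f : ℤ → ℝ) (i : ℤ) :
    compositeSum f i (i + 7) = 251 / 720 * (f i + f (i + 7)) + 299 / 240 * (f (i + 1) + f (i + 6))
      + 211 / 240 * (f (i + 2) + f (i + 5)) + 739 / 720 * (f (i + 3) + f (i + 4)) := by
  rw [compositeSum, Finset.Icc_eq_empty (by omega), Finset.sum_empty, add_zero]
  ring_nf

theorem compositeSum_add_one (f : ℤ → ℝ) {i j : ℤ} (hij : i + 7 ≤ j) :
    compositeSum f i (j + 1) = compositeSum f i j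
      + (251 * f (j + 1) + 646 * f j - 264 * f (j - 1) + 106 * f (j - 2) - 19 * f (j - 3))
        / 720 := by
  have hIcc : Finset.Icc (i + 4) (j + 1 - 4) = insert (j - 4 + 1) (Finset.Icc (i + 4) (j - 4)) := by
    rw [Finset.insert_Icc_right_eq_Icc_add_one (by omega)]; ring_nf
  rw [compositeSum, compositeSum, hIcc, Finset.sum_insert (by simp)]
  ring_nf

theorem Polynomial.intervalIntegral_eval_eq_mul_compositeSum {p : ℝ[X]} (hp : p.degree ≤ 3)
    (h : ℝ) {i j : ℤ} (hij : i + 7 ≤ j) :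
    ∫ x in i * h..j * h, p.eval x = h * compositeSum (fun k => p.eval (k * h)) i j := by
  induction j, hij using Int.leInduction with
  | base =>
    rw [compositeSum_add_seven]
    push_cast
    simp only [add_mul, one_mul]
    rw [intervalIntegral_eval_eq_eightPoint hp]
  | succ j hij ih =>
    have hp4 : p.degree ≤ 4 := hp.trans (by norm_num)
    rw [← intervalIntegral.integral_add_adjacent_intervals (p.continuous.intervalIntegrable _ _)
      (p.continuous.intervalIntegrable _ _), ih, compositeSum_add_one _ hij]
    push_cast
    rw [add_one_mul, intervalIntegral_eval_eq_adamsMoulton hp4]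
    simp only [sub_mul]
    ring_nf

theorem composite_quadrature_exact_for_cubics_general
    (h : ℝ) (i j : ℤ) (hij7 : 7 ≤ j - i)
    (p : Polynomial ℝ) (hp : p.degree ≤ 3) :
    ∫ x in ((i : ℝ) * h)..((j : ℝ) * h), p.eval x
      = h * ((251 / 720) * (p.eval ((i : ℝ) * h) + p.eval ((j : ℝ) * h))
          + (299 / 240) * (p.eval (((i : ℝ) + 1) * h) + p.eval (((j : ℝ) - 1) * h))
          + (211 / 240) * (p.eval (((i : ℝ) + 2) * h) + p.eval (((j : ℝ) - 2) * h))
          + (739 / 720) * (p.eval (((i : ℝ) + 3) * h) + p.eval (((j : ℝ) - 3) * h))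
          + ∑ k ∈ Finset.Icc (i + 4) (j - 4), p.eval ((k : ℝ) * h)) := by
  rw [intervalIntegral_eval_eq_mul_compositeSum hp h (by omega), compositeSum]
  push_cast
  rfl

/-- the fifth-order composite quadrature rule with endpoint weights
`251/720, 299/240, 211/240, 739/720` and interior weight `1` is exact for cubic
polynomials on a uniform grid `x_k = k·h` when `j − i ≥ 7`. -/
theorem composite_quadrature_exact_for_cubics
    (h : ℝ) (hh : 0 < h) (i j : ℤ) (hij : i < j) (hij7 : 7 ≤ j - i)
    (p : Polynomial ℝ) (hp : p.degree ≤ 3) :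
    ∫ x in ((i : ℝ) * h)..((j : ℝ) * h), p.eval x
      = h * ((251 / 720) * (p.eval ((i : ℝ) * h) + p.eval ((j : ℝ) * h))
          + (299 / 240) * (p.eval (((i : ℝ) + 1) * h) + p.eval (((j : ℝ) - 1) * h))
          + (211 / 240) * (p.eval (((i : ℝ) + 2) * h) + p.eval (((j : ℝ) - 2) * h))
          + (739 / 720) * (p.eval (((i : ℝ) + 3) * h) + p.eval (((j : ℝ) - 3) * h))
          + ∑ k ∈ Finset.Icc (i + 4) (j - 4), p.eval ((k : ℝ) * h)) :=
  composite_quadrature_exact_for_cubics_general h i j hij7 p hp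
end
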